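/- Let φ be an LTL formula and w an infinite word. Let G be the set of G-subformulas Gψ of φ such that w ⊨ FGψ, and for Gψ ∈ G let ind(w,ψ) be the smallest index j such that w_j ⊨ Gψ. Then w ⊨ φ if and only if for almost every i ∈ ℕ: ⋀_{Gψ∈G}(Gψ ∧ ⋀_{j=ind(w,ψ)}^{i} afG(ψ, w[j..i])) ∧ ⋀_{Gψ∈GG(φ)\G} ¬Gψ propositionally implies af(φ, w[0..i]). -/

import Mathlib

/-!
(⇐) Take `i` beyond every `ind(w, ψ)` and evaluate each temporal atom on the suffix `w_{i+1}`.
This valuation satisfies the premise, and `w_{i+1} ⊨ af(φ, w[0..i])` iff `w ⊨ φ`.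

(⇒) By induction on `ψ`: if `w_m ⊨ ψ`, then for almost every `i` the premise propositionally
implies `af(ψ, w[m..i])`. Simultaneously, for each `Gσ ∈ GG(ψ)` with `w ⊨ FGσ`, it implies
`af(σ, w[m..i])` for all `m` from `ind(w, σ)` to `i`. Let `B` bound the indices of the
`G`-subformulas of `σ`. Below `B` only finitely many `m` remain, and the first claim covers them.
From `B` on, the premise contains `afG(σ, w[m..i])`. Since `afG` differs from `af` only in not
unfolding `G`, the second claim for the `G`-subformulas of `σ` upgrades it to `af(σ, w[m..i])`.
-/

namespace LTLF

/-- LTL formulas in negation normal form over atomic propositions `Ap`. -/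
inductive LTL (Ap : Type) : Type
  | tt : LTL Ap
  | ff : LTL Ap
  | atom : Ap → LTL Ap
  | natom : Ap → LTL Ap
  | and : LTL Ap → LTL Ap → LTL Ap
  | or : LTL Ap → LTL Ap → LTL Ap
  | next : LTL Ap → LTL Ap
  | fut : LTL Ap → LTL Ap
  | glob : LTL Ap → LTL Ap
  | untl : LTL Ap → LTL Ap → LTL Ap

variable {Ap : Type}

/-- Infinite words over the alphabet `2^Ap`. -/
abbrev Word (Ap : Type) := ℕ → Set Ap

/-- The suffix `w_k`. -/
def suffix (w : Word Ap) (k : ℕ) : Word Ap := fun i => w (i + k)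

/-- Standard LTL semantics on infinite words. -/
def Sat : LTL Ap → Word Ap → Prop
  | .tt, _ => True
  | .ff, _ => False
  | .atom a, w => a ∈ w 0
  | .natom a, w => a ∉ w 0
  | .and φ ψ, w => Sat φ w ∧ Sat ψ w
  | .or φ ψ, w => Sat φ w ∨ Sat ψ w
  | .next φ, w => Sat φ (suffix w 1)
  | .fut φ, w => ∃ k, Sat φ (suffix w k)
  | .glob φ, w => ∀ k, Sat φ (suffix w k)
  | .untl φ ψ, w => ∃ k, Sat ψ (suffix w k) ∧ ∀ j < k, Sat φ (suffix w j)

open Classical in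
/-- The "after function" `af(φ, ν)`. -/
noncomputable def af : LTL Ap → Set Ap → LTL Ap
  | .tt, _ => .tt
  | .ff, _ => .ff
  | .atom a, ν => if a ∈ ν then .tt else .ff
  | .natom a, ν => if a ∈ ν then .ff else .tt
  | .and φ ψ, ν => .and (af φ ν) (af ψ ν)
  | .or φ ψ, ν => .or (af φ ν) (af ψ ν)
  | .next φ, _ => φ
  | .fut φ, ν => .or (af φ ν) (.fut φ)
  | .glob φ, ν => .and (af φ ν) (.glob φ)
  | .untl φ ψ, ν => .or (af ψ ν) (.and (af φ ν) (.untl φ ψ))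

/-- `af` extended to finite words. -/
noncomputable def afw (φ : LTL Ap) (u : List (Set Ap)) : LTL Ap := u.foldl af φ

open Classical in
/-- The variant `afG`, identical to `af` except `afG(Gφ, ν) = Gφ`. -/
noncomputable def afG : LTL Ap → Set Ap → LTL Ap
  | .tt, _ => .tt
  | .ff, _ => .ff
  | .atom a, ν => if a ∈ ν then .tt else .ff
  | .natom a, ν => if a ∈ ν then .ff else .tt
  | .and φ ψ, ν => .and (afG φ ν) (afG ψ ν)
  | .or φ ψ, ν => .or (afG φ ν) (afG ψ ν)
  | .next φ, _ => φ
  | .fut φ, ν => .or (afG φ ν) (.fut φ)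
  | .glob φ, _ => .glob φ
  | .untl φ ψ, ν => .or (afG ψ ν) (.and (afG φ ν) (.untl φ ψ))

/-- `afG` extended to finite words. -/
noncomputable def afGw (φ : LTL Ap) (u : List (Set Ap)) : LTL Ap := u.foldl afG φ

/-- The finite infix `w[i..j] = w[i] w[i+1] ⋯ w[j]`. -/
def infixW (w : Word Ap) (i j : ℕ) : List (Set Ap) :=
  (List.range (j + 1 - i)).map (fun k => w (i + k))

/-- The finite prefix `w[0..i]`. -/
def prefixW (w : Word Ap) (i : ℕ) : List (Set Ap) := infixW w 0 i

/-- Concatenation of a finite word with an infinite word. -/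
def cat (u : List (Set Ap)) (w : Word Ap) : Word Ap :=
  fun k => if h : k < u.length then u.get ⟨k, h⟩ else w (k - u.length)

/-- Propositional evaluation of a formula under a valuation `v`, treating
literals and temporal formulas (`X`, `F`, `G`, `U`) as opaque propositional atoms. -/
def propSat (v : LTL Ap → Prop) : LTL Ap → Prop
  | .tt => True
  | .ff => False
  | .and φ ψ => propSat v φ ∧ propSat v ψ
  | .or φ ψ => propSat v φ ∨ propSat v ψ
  | φ => v φ

/-- A valuation is consistent on literals: `a` and `¬a` get complementary values. -/
def LitConsistent (v : LTL Ap → Prop) : Prop :=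
  ∀ a : Ap, v (.atom a) ↔ ¬ v (.natom a)

/-- Propositional implication `φ ⊨_p ψ`. -/
def PropImp (φ ψ : LTL Ap) : Prop :=
  ∀ v : LTL Ap → Prop, LitConsistent v → propSat v φ → propSat v ψ

/-- Propositional equivalence `φ ≡_p ψ`. -/
def PropEquiv (φ ψ : LTL Ap) : Prop :=
  ∀ v : LTL Ap → Prop, LitConsistent v → (propSat v φ ↔ propSat v ψ)

/-- `⋀_{χ ∈ H} χ ⊨_p ψ` : the (possibly infinite) conjunction of the
hypotheses `H` propositionally implies `ψ`. -/
def PropImpSet (H : Set (LTL Ap)) (ψ : LTL Ap) : Prop :=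
  ∀ v : LTL Ap → Prop, LitConsistent v → (∀ χ ∈ H, propSat v χ) → propSat v ψ

/-- The list of subformulas of a formula. -/
def subfs : LTL Ap → List (LTL Ap)
  | .tt => [.tt]
  | .ff => [.ff]
  | .atom a => [.atom a]
  | .natom a => [.natom a]
  | .and φ ψ => .and φ ψ :: (subfs φ ++ subfs ψ)
  | .or φ ψ => .or φ ψ :: (subfs φ ++ subfs ψ)
  | .next φ => .next φ :: subfs φ
  | .fut φ => .fut φ :: subfs φ
  | .glob φ => .glob φ :: subfs φ
  | .untl φ ψ => .untl φ ψ :: (subfs φ ++ subfs ψ)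

/-- `Gψ` is a `G`-subformula of `φ`. -/
def GSub (φ ψ : LTL Ap) : Prop := LTL.glob ψ ∈ subfs φ

/-- A formula is `G`-free if it contains no occurrence of `G`. -/
def GFree : LTL Ap → Prop
  | .glob _ => False
  | .and φ ψ => GFree φ ∧ GFree ψ
  | .or φ ψ => GFree φ ∧ GFree ψ
  | .next φ => GFree φ
  | .fut φ => GFree φ
  | .untl φ ψ => GFree φ ∧ GFree ψ
  | _ => True

/-- `ind(w, ψ)`: the least index `j` with `w_j ⊨ Gψ`. -/
noncomputable def ind (w : Word Ap) (ψ : LTL Ap) : ℕ :=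
  sInf {j | Sat (.glob ψ) (suffix w j)}

open Filter

section Words

variable {w : Word Ap}

@[simp]
lemma suffix_zero (w : Word Ap) : suffix w 0 = w := rfl

@[simp]
lemma suffix_suffix (w : Word Ap) (j k : ℕ) : suffix (suffix w j) k = suffix w (k + j) := by
  funext i
  simp [suffix, Nat.add_assoc]

lemma infixW_of_lt {m i : ℕ} (h : i < m) : infixW w m i = [] := by
  simp [infixW, show i + 1 - m = 0 by omega]

lemma infixW_cons {m i : ℕ} (h : m ≤ i) : infixW w m i = w m :: infixW w (m + 1) i := by
  rw [infixW, show i + 1 - m = i + 1 - (m + 1) + 1 by omega, List.range_succ_eq_map]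
  simp [infixW, Function.comp_def, Nat.add_assoc, Nat.add_comm 1]

@[simp]
lemma length_infixW (m i : ℕ) : (infixW w m i).length = i + 1 - m := by
  simp [infixW]

lemma drop_infixW (m i k : ℕ) : (infixW w m i).drop k = infixW w (m + k) i := by
  induction k generalizing m with
  | zero => rfl
  | succ k ih =>
    rcases le_or_gt m i with h | h
    · rw [infixW_cons h, List.drop_succ_cons, ih, Nat.add_right_comm, Nat.add_assoc]
    · rw [infixW_of_lt h, infixW_of_lt (by omega), List.drop_nil]

end Words

section Semantics

variable {w : Word Ap} {σ τ : LTL Ap}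

lemma sat_fut_iff : Sat (.fut σ) w ↔ Sat σ w ∨ Sat (.fut σ) (suffix w 1) := by
  simp only [Sat, suffix_suffix]
  exact Nat.or_exists_add_one.symm

lemma sat_glob_iff : Sat (.glob σ) w ↔ Sat σ w ∧ Sat (.glob σ) (suffix w 1) := by
  simp only [Sat, suffix_suffix]
  exact Nat.and_forall_add_one.symm

lemma sat_untl_iff :
    Sat (.untl σ τ) w ↔ Sat τ w ∨ Sat σ w ∧ Sat (.untl σ τ) (suffix w 1) := by
  simp only [Sat, suffix_suffix]
  rw [← Nat.or_exists_add_one]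
  simp only [Nat.forall_lt_succ_left, suffix_zero, Nat.not_lt_zero, IsEmpty.forall_iff,
    implies_true, and_true]
  simp only [and_left_comm (a := Sat τ _), exists_and_left]

lemma sat_af_iff (χ : LTL Ap) (w : Word Ap) : Sat (af χ (w 0)) (suffix w 1) ↔ Sat χ w := by
  induction χ with
  | atom a | natom a => by_cases h : a ∈ w 0 <;> simp [af, Sat, h]
  | fut σ ih => rw [sat_fut_iff (σ := σ)]; simp only [af, Sat] at ih ⊢; rw [ih]
  | glob σ ih => rw [sat_glob_iff (σ := σ)]; simp only [af, Sat] at ih ⊢; rw [ih]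
  | untl σ τ ihσ ihτ => rw [sat_untl_iff (σ := σ)]; simp only [af, Sat] at ihσ ihτ ⊢; rw [ihσ, ihτ]
  | _ => simp_all [af, Sat]

lemma sat_afG_of_sat (χ : LTL Ap) (w : Word Ap) : Sat χ w → Sat (afG χ (w 0)) (suffix w 1) := by
  induction χ with
  | atom a | natom a => by_cases h : a ∈ w 0 <;> simp [afG, Sat, h]
  | fut σ ih => rw [sat_fut_iff (σ := σ)]; simp only [afG, Sat] at ih ⊢; tauto
  | glob σ ih => rw [sat_glob_iff (σ := σ)]; exact And.right
  | untl σ τ ihσ ihτ => rw [sat_untl_iff (σ := σ)]; simp only [afG, Sat] at ihσ ihτ ⊢; tauto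
  | _ => simp only [afG, Sat] at *; tauto

end Semantics

section AfterFunction

variable {α β σ τ : LTL Ap} {ν : Set Ap} {u : List (Set Ap)}

@[simp] lemma afw_nil : afw α [] = α := rfl
@[simp] lemma afGw_nil : afGw α [] = α := rfl

lemma afw_cons : afw α (ν :: u) = afw (af α ν) u := rfl
lemma afGw_cons : afGw α (ν :: u) = afGw (afG α ν) u := rfl

@[simp]
lemma afw_tt : afw (.tt : LTL Ap) u = .tt := by
  induction u <;> simp_all [afw_cons, af]

@[simp]
lemma afGw_ff : afGw (.ff : LTL Ap) u = .ff := by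
  induction u <;> simp_all [afGw_cons, afG]

@[simp]
lemma afw_and : afw (.and α β) u = .and (afw α u) (afw β u) := by
  induction u generalizing α β <;> simp_all [afw_cons, af]

@[simp]
lemma afw_or : afw (.or α β) u = .or (afw α u) (afw β u) := by
  induction u generalizing α β <;> simp_all [afw_cons, af]

@[simp]
lemma afGw_and : afGw (.and α β) u = .and (afGw α u) (afGw β u) := by
  induction u generalizing α β <;> simp_all [afGw_cons, afG]

@[simp]
lemma afGw_or : afGw (.or α β) u = .or (afGw α u) (afGw β u) := by
  induction u generalizing α β <;> simp_all [afGw_cons, afG]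

@[simp]
lemma afGw_glob : afGw (.glob σ) u = .glob σ := by
  induction u <;> simp_all [afGw_cons, afG]

lemma afw_next_cons : afw (.next σ) (ν :: u) = afw σ u := rfl
lemma afGw_next_cons : afGw (.next σ) (ν :: u) = afGw σ u := rfl

lemma afw_fut_cons : afw (.fut σ) (ν :: u) = .or (afw σ (ν :: u)) (afw (.fut σ) u) :=
  afw_or

lemma afGw_fut_cons : afGw (.fut σ) (ν :: u) = .or (afGw σ (ν :: u)) (afGw (.fut σ) u) :=
  afGw_or

lemma afw_glob_cons : afw (.glob σ) (ν :: u) = .and (afw σ (ν :: u)) (afw (.glob σ) u) :=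
  afw_and

lemma afw_untl_cons :
    afw (.untl σ τ) (ν :: u) = .or (afw τ (ν :: u)) (.and (afw σ (ν :: u)) (afw (.untl σ τ) u)) := by
  simp [afw_cons, af]

lemma afGw_untl_cons :
    afGw (.untl σ τ) (ν :: u) =
      .or (afGw τ (ν :: u)) (.and (afGw σ (ν :: u)) (afGw (.untl σ τ) u)) := by
  simp [afGw_cons, afG]

end AfterFunction

section Infix

variable {w : Word Ap} {i j : ℕ}

lemma sat_afw_infixW_iff (χ : LTL Ap) (h : j ≤ i + 1) :
    Sat (afw χ (infixW w j i)) (suffix w (i + 1)) ↔ Sat χ (suffix w j) := by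
  induction h using Nat.decreasingInduction generalizing χ with
  | self => simp [infixW_of_lt]
  | of_succ j hj ih =>
    have := sat_af_iff χ (suffix w j)
    rw [suffix_suffix, Nat.add_comm 1] at this
    rw [infixW_cons (by omega), afw_cons, ih, ← this]
    simp [suffix]

lemma sat_afGw_infixW (χ : LTL Ap) (h : j ≤ i + 1) (hχ : Sat χ (suffix w j)) :
    Sat (afGw χ (infixW w j i)) (suffix w (i + 1)) := by
  induction h using Nat.decreasingInduction generalizing χ with
  | self => simpa [infixW_of_lt]
  | of_succ j hj ih =>
    have := sat_afG_of_sat χ (suffix w j) hχ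
    rw [suffix_suffix, Nat.add_comm 1] at this
    rw [infixW_cons (by omega), afGw_cons]
    exact ih _ (by simpa [suffix] using this)

end Infix

section Subformulas

lemma subfs_subset_of_mem {α β : LTL Ap} (h : α ∈ subfs β) : subfs α ⊆ subfs β := by
  induction β with
  | and β₁ β₂ ih₁ ih₂ | or β₁ β₂ ih₁ ih₂ | untl β₁ β₂ ih₁ ih₂ =>
    simp only [subfs, List.mem_cons, List.mem_append] at h
    rcases h with rfl | h | h <;> simp_all [subfs, List.subset_cons_of_subset]
  | next β ih | fut β ih | glob β ih =>
    simp only [subfs, List.mem_cons] at h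
    rcases h with rfl | h <;> simp_all [subfs, List.subset_cons_of_subset]
  | _ => simp_all [subfs]

lemma finite_setOf_GSub (φ : LTL Ap) : {ρ | GSub φ ρ}.Finite :=
  (subfs φ).finite_toSet.preimage fun _ _ _ _ h => LTL.glob.inj h

end Subformulas

section Propositional

variable {v : LTL Ap → Prop} {α β σ τ χ : LTL Ap} {ν : Set Ap} {u : List (Set Ap)}

lemma propSat_sat_iff (w : Word Ap) (χ : LTL Ap) : propSat (Sat · w) χ ↔ Sat χ w := by
  induction χ <;> simp_all [propSat, Sat]

lemma litConsistent_sat (w : Word Ap) : LitConsistent (Sat · w) :=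
  fun _ => not_not.symm

lemma propSat_afw_fut {k : ℕ} (hk : k < u.length) (h : propSat v (afw σ (u.drop k))) :
    propSat v (afw (.fut σ) u) := by
  induction u generalizing k with
  | nil => simp at hk
  | cons ν u ih =>
    rw [afw_fut_cons]
    cases k with
    | zero => exact Or.inl h
    | succ k => exact Or.inr (ih (by simpa using hk) h)

lemma propSat_afw_untl {k : ℕ} (hk : k < u.length) (hτ : propSat v (afw τ (u.drop k)))
    (hσ : ∀ j < k, propSat v (afw σ (u.drop j))) : propSat v (afw (.untl σ τ) u) := by
  induction u generalizing k with
  | nil => simp at hk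
  | cons ν u ih =>
    rw [afw_untl_cons]
    cases k with
    | zero => exact Or.inl hτ
    | succ k =>
      exact Or.inr ⟨hσ 0 k.succ_pos,
        ih (by simpa using hk) hτ fun j hj => hσ (j + 1) (Nat.succ_lt_succ hj)⟩

lemma propSat_afw_glob (hG : propSat v (.glob σ))
    (h : ∀ k < u.length, propSat v (afw σ (u.drop k))) : propSat v (afw (.glob σ) u) := by
  induction u with
  | nil => exact hG
  | cons ν u ih =>
    rw [afw_glob_cons]
    exact ⟨h 0 (by simp), ih fun k hk => h (k + 1) (by simpa using hk)⟩

/-- `u.drop k` with `k < u.length` ranges over the nonempty suffixes of `u`. -/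
def GlobsUnfold (v : LTL Ap → Prop) (u : List (Set Ap)) (χ : LTL Ap) : Prop :=
  ∀ ρ, GSub χ ρ → propSat v (.glob ρ) → ∀ k < u.length, propSat v (afw ρ (u.drop k))

lemma GlobsUnfold.mono (hsub : subfs α ⊆ subfs β) (h : GlobsUnfold v u β) : GlobsUnfold v u α :=
  fun ρ hρ => h ρ (hsub hρ)

lemma GlobsUnfold.tail (h : GlobsUnfold v (ν :: u) χ) : GlobsUnfold v u χ :=
  fun ρ hρ hv k hk => h ρ hρ hv (k + 1) (by simpa using hk)

lemma propSat_afw_of_afGw (hχ : GlobsUnfold v u χ) (h : propSat v (afGw χ u)) :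
    propSat v (afw χ u) := by
  induction u generalizing χ with
  | nil => exact h
  | cons ν u ihu =>
    induction χ with
    | tt => simp [propSat]
    | ff => simp [propSat] at h
    | atom a | natom a => by_cases ha : a ∈ ν <;> simp_all [afw_cons, afGw_cons, af, afG, propSat]
    | and α β ihα ihβ =>
      simp only [afw_and, afGw_and] at h ⊢
      exact ⟨ihα (hχ.mono (by simp [subfs])) h.1, ihβ (hχ.mono (by simp [subfs])) h.2⟩
    | or α β ihα ihβ =>
      simp only [afw_or, afGw_or] at h ⊢
      exact h.imp (ihα (hχ.mono (by simp [subfs]))) (ihβ (hχ.mono (by simp [subfs])))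
    | next σ =>
      rw [afGw_next_cons] at h
      rw [afw_next_cons]
      exact ihu (hχ.tail.mono (by simp [subfs])) h
    | fut σ ihσ =>
      rw [afGw_fut_cons] at h
      rw [afw_fut_cons]
      exact h.imp (ihσ (hχ.mono (by simp [subfs]))) (ihu hχ.tail)
    | glob σ =>
      rw [afGw_glob] at h
      exact propSat_afw_glob h (hχ σ (by simp [GSub, subfs]) h)
    | untl σ τ ihσ ihτ =>
      rw [afGw_untl_cons] at h
      rw [afw_untl_cons]
      exact h.imp (ihτ (hχ.mono (by simp [subfs])))
        (And.imp (ihσ (hχ.mono (by simp [subfs]))) (ihu hχ.tail))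

end Propositional

section Master

variable {w : Word Ap} {v : LTL Ap → Prop} {α β φ σ τ ρ : LTL Ap} {i j k m : ℕ}

lemma sat_of_sat_glob (h : Sat (.glob ρ) (suffix w j)) (hjk : j ≤ k) : Sat ρ (suffix w k) := by
  have := h (k - j)
  rwa [suffix_suffix, Nat.sub_add_cancel hjk] at this

lemma sat_glob_suffix_mono (h : Sat (.glob ρ) (suffix w j)) (hjk : j ≤ k) :
    Sat (.glob ρ) (suffix w k) := fun n => by
  rw [suffix_suffix]
  exact sat_of_sat_glob h (by omega)

lemma sat_glob_ind (h : Sat (.fut (.glob ρ)) w) : Sat (.glob ρ) (suffix w (ind w ρ)) :=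
  Nat.sInf_mem h

lemma ind_le (h : Sat (.glob ρ) (suffix w j)) : ind w ρ ≤ j :=
  Nat.sInf_le h

lemma eventually_ind_le (w : Word Ap) (φ : LTL Ap) :
    ∀ᶠ i in atTop, ∀ ρ, GSub φ ρ → ind w ρ ≤ i :=
  (eventually_all_finite (finite_setOf_GSub φ)).2 fun ρ _ => eventually_ge_atTop (ind w ρ)

/-- The premise of the master formula at position `i`, read under the valuation `v`; the set `𝒢`
is `{Gψ ∈ GG(φ) | w ⊨ FGψ}`. -/
structure Premise (w : Word Ap) (φ : LTL Ap) (i : ℕ) (v : LTL Ap → Prop) : Prop where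
  pos : ∀ ψ, GSub φ ψ → Sat (.fut (.glob ψ)) w →
    propSat v (.glob ψ) ∧ ∀ j, ind w ψ ≤ j → j ≤ i → propSat v (afGw ψ (infixW w j i))
  neg : ∀ ψ, GSub φ ψ → ¬ Sat (.fut (.glob ψ)) w → ¬ propSat v (.glob ψ)

lemma Premise.mono (hsub : subfs α ⊆ subfs β) (h : Premise w β i v) : Premise w α i v :=
  ⟨fun ψ hψ => h.pos ψ (hsub hψ), fun ψ hψ => h.neg ψ (hsub hψ)⟩

lemma Premise.sat_fut_glob (h : Premise w φ i v) (hρ : GSub φ ρ) (hv : propSat v (.glob ρ)) :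
    Sat (.fut (.glob ρ)) w :=
  by_contra fun hn => h.neg ρ hρ hn hv

lemma premise_sat_suffix (hi : ∀ ρ, GSub φ ρ → ind w ρ ≤ i) :
    Premise w φ i (Sat · (suffix w (i + 1))) where
  pos ρ hρ hFG :=
    ⟨sat_glob_suffix_mono (sat_glob_ind hFG) (by have := hi ρ hρ; omega), fun j hj hji =>
      (propSat_sat_iff _ _).2 <|
        sat_afGw_infixW ρ (by omega) (sat_of_sat_glob (sat_glob_ind hFG) hj)⟩
  neg _ _ hFG hv := hFG ⟨i + 1, hv⟩

def AfwEventually (w : Word Ap) (ψ : LTL Ap) (m : ℕ) : Prop :=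
  ∀ᶠ i in atTop, ∀ v, Premise w ψ i v → propSat v (afw ψ (infixW w m i))

def GlobAfwEventually (w : Word Ap) (σ : LTL Ap) : Prop :=
  ∀ᶠ i in atTop, ∀ v, Premise w (.glob σ) i v →
    ∀ m, ind w σ ≤ m → m ≤ i → propSat v (afw σ (infixW w m i))

lemma afwEventually_tt : AfwEventually w .tt m :=
  Eventually.of_forall fun _ _ _ => by simp [propSat]

lemma afwEventually_atom {a : Ap} (ha : a ∈ w m) : AfwEventually w (.atom a) m := by
  filter_upwards [eventually_ge_atTop m] with i hi v _
  simp [infixW_cons hi, afw_cons, af, ha, propSat]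

lemma afwEventually_natom {a : Ap} (ha : a ∉ w m) : AfwEventually w (.natom a) m := by
  filter_upwards [eventually_ge_atTop m] with i hi v _
  simp [infixW_cons hi, afw_cons, af, ha, propSat]

lemma AfwEventually.and (hα : AfwEventually w α m) (hβ : AfwEventually w β m) :
    AfwEventually w (.and α β) m := by
  filter_upwards [hα, hβ] with i hα hβ v hv
  rw [afw_and]
  exact ⟨hα v (hv.mono (by simp [subfs])), hβ v (hv.mono (by simp [subfs]))⟩

lemma AfwEventually.or_left (h : AfwEventually w α m) : AfwEventually w (.or α β) m := by
  filter_upwards [h] with i h v hv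
  rw [afw_or]
  exact Or.inl (h v (hv.mono (by simp [subfs])))

lemma AfwEventually.or_right (h : AfwEventually w β m) : AfwEventually w (.or α β) m := by
  filter_upwards [h] with i h v hv
  rw [afw_or]
  exact Or.inr (h v (hv.mono (by simp [subfs])))

lemma AfwEventually.next (h : AfwEventually w σ (m + 1)) : AfwEventually w (.next σ) m := by
  filter_upwards [h, eventually_ge_atTop m] with i h hi v hv
  rw [infixW_cons hi, afw_next_cons]
  exact h v (hv.mono (by simp [subfs]))

lemma AfwEventually.fut (h : AfwEventually w σ (m + k)) : AfwEventually w (.fut σ) m := by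
  filter_upwards [h, eventually_ge_atTop (m + k)] with i h hi v hv
  refine propSat_afw_fut (k := k) (by simp; omega) ?_
  rw [drop_infixW]
  exact h v (hv.mono (by simp [subfs]))

lemma AfwEventually.untl (hτ : AfwEventually w τ (m + k))
    (hσ : ∀ j < k, AfwEventually w σ (m + j)) : AfwEventually w (.untl σ τ) m := by
  have hσ' := (eventually_all_finset (Finset.range k)).2 fun j hj => hσ j (Finset.mem_range.1 hj)
  filter_upwards [hτ, hσ', eventually_ge_atTop (m + k)] with i hτ hσ hi v hv
  refine propSat_afw_untl (k := k) (by simp; omega) ?_ fun j hj => ?_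
  · rw [drop_infixW]
    exact hτ v (hv.mono (by simp [subfs]))
  · rw [drop_infixW]
    exact hσ j (Finset.mem_range.2 hj) v (hv.mono (by simp [subfs]))

lemma afwEventually_glob (hs : Sat (.glob σ) (suffix w m)) (hσ : GlobAfwEventually w σ) :
    AfwEventually w (.glob σ) m := by
  filter_upwards [hσ] with i hσ v hv
  refine propSat_afw_glob (hv.pos σ (by simp [GSub, subfs]) ⟨m, hs⟩).1 fun k hk => ?_
  rw [drop_infixW]
  exact hσ v hv _ (by have := ind_le hs; omega) (by simp at hk; omega)

lemma globAfwEventually_of_sat_fut (hFG : Sat (.fut (.glob σ)) w)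
    (hσ : ∀ m, Sat σ (suffix w m) → AfwEventually w σ m)
    (hGG : ∀ ρ, GSub σ ρ → Sat (.fut (.glob ρ)) w → GlobAfwEventually w ρ) :
    GlobAfwEventually w σ := by
  obtain ⟨B, hB⟩ := (eventually_ind_le w σ).exists
  have early := (eventually_all_finset (Finset.Ico (ind w σ) B)).2 fun m hm =>
    hσ m (sat_of_sat_glob (sat_glob_ind hFG) (Finset.mem_Ico.1 hm).1)
  have late := (eventually_all_finite (finite_setOf_GSub σ)).2 fun ρ hρ =>
    eventually_imp_distrib_left.2 (hGG ρ hρ)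
  filter_upwards [early, late] with i early late v hv m hm hmi
  by_cases hmB : m < B
  · exact early m (Finset.mem_Ico.2 ⟨hm, hmB⟩) v (hv.mono (by simp [subfs]))
  -- past `B ≥ ind w ρ`, the claim for each `Gρ ∈ GG(σ)` supplies what `afG` leaves out of `af`
  refine propSat_afw_of_afGw (fun ρ hρ hvρ k hk => ?_)
    ((hv.pos σ (by simp [GSub, subfs]) hFG).2 m hm hmi)
  have hρσ : subfs (.glob ρ) ⊆ subfs (.glob σ) :=
    subfs_subset_of_mem (List.mem_cons_of_mem _ hρ)
  rw [drop_infixW]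
  exact late ρ hρ (hv.sat_fut_glob (hρσ (by simp [subfs])) hvρ) v (hv.mono hρσ) _
    (by have := hB ρ hρ; omega) (by simp at hk; omega)

theorem afwEventually_and_globAfwEventually (ψ : LTL Ap) :
    (∀ m, Sat ψ (suffix w m) → AfwEventually w ψ m) ∧
      ∀ ρ, GSub ψ ρ → Sat (.fut (.glob ρ)) w → GlobAfwEventually w ρ := by
  induction ψ with
  | tt => exact ⟨fun _ _ => afwEventually_tt, fun ρ h => by simp [GSub, subfs] at h⟩
  | ff => exact ⟨fun _ h => h.elim, fun ρ h => by simp [GSub, subfs] at h⟩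
  | atom a =>
    exact ⟨fun _ h => afwEventually_atom (by simpa [Sat, suffix] using h),
      fun ρ h => by simp [GSub, subfs] at h⟩
  | natom a =>
    exact ⟨fun _ h => afwEventually_natom (by simpa [Sat, suffix] using h),
      fun ρ h => by simp [GSub, subfs] at h⟩
  | and α β ihα ihβ =>
    refine ⟨fun m h => (ihα.1 m h.1).and (ihβ.1 m h.2), fun ρ hρ => ?_⟩
    exact (by simpa [GSub, subfs] using hρ : GSub α ρ ∨ GSub β ρ).elim (ihα.2 ρ) (ihβ.2 ρ)
  | or α β ihα ihβ =>
    refine ⟨fun m h => h.elim (fun h => (ihα.1 m h).or_left) (fun h => (ihβ.1 m h).or_right),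
      fun ρ hρ => ?_⟩
    exact (by simpa [GSub, subfs] using hρ : GSub α ρ ∨ GSub β ρ).elim (ihα.2 ρ) (ihβ.2 ρ)
  | next σ ih =>
    refine ⟨fun m h => (ih.1 (m + 1) ?_).next, fun ρ hρ => ih.2 ρ (by simpa [GSub, subfs] using hρ)⟩
    simpa [Sat, Nat.add_comm] using h
  | fut σ ih =>
    refine ⟨fun m ⟨k, hk⟩ => AfwEventually.fut (k := k) (ih.1 _ ?_),
      fun ρ hρ => ih.2 ρ (by simpa [GSub, subfs] using hρ)⟩
    rwa [suffix_suffix, Nat.add_comm] at hk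
  | untl σ τ ihσ ihτ =>
    refine ⟨fun m ⟨k, hk, hj⟩ => AfwEventually.untl (k := k) (ihτ.1 _ ?_) fun j hj' => ihσ.1 _ ?_,
      fun ρ hρ => ?_⟩
    · rwa [suffix_suffix, Nat.add_comm] at hk
    · have := hj j hj'
      rwa [suffix_suffix, Nat.add_comm] at this
    · exact (by simpa [GSub, subfs] using hρ : GSub σ ρ ∨ GSub τ ρ).elim (ihσ.2 ρ) (ihτ.2 ρ)
  | glob σ ih =>
    have hσ (hFG : Sat (.fut (.glob σ)) w) : GlobAfwEventually w σ :=
      globAfwEventually_of_sat_fut hFG ih.1 ih.2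
    refine ⟨fun m h => afwEventually_glob h (hσ ⟨m, h⟩), fun ρ hρ => ?_⟩
    rcases (by simpa [GSub, subfs] using hρ : ρ = σ ∨ GSub σ ρ) with rfl | hρ
    exacts [hσ, ih.2 ρ hρ]

end Master

/-- `w ⊨ φ` iff for almost every `i`, the conjunction of
`Gψ ∧ ⋀_{j=ind(w,ψ)}^i afG(ψ, w[j..i])` over `Gψ ∈ G` and of the atoms `¬Gψ`
for `Gψ ∈ GG(φ)\G` (encoded by forcing `v(Gψ)` false) propositionally implies
`af(φ, w[0..i])`, where `G = {Gψ ∈ GG(φ) | w ⊨ FGψ}`. -/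
theorem master_correctness {Ap : Type} (φ : LTL Ap) (w : Word Ap) :
    Sat φ w ↔
      ∃ N : ℕ, ∀ i ≥ N, ∀ v : LTL Ap → Prop, LitConsistent v →
        (∀ ψ : LTL Ap, GSub φ ψ → Sat (LTL.fut (LTL.glob ψ)) w →
          propSat v (LTL.glob ψ) ∧
            ∀ j : ℕ, ind w ψ ≤ j → j ≤ i → propSat v (afGw ψ (infixW w j i))) →
        (∀ ψ : LTL Ap, GSub φ ψ → ¬ Sat (LTL.fut (LTL.glob ψ)) w →
          ¬ propSat v (LTL.glob ψ)) →
        propSat v (afw φ (prefixW w i)) := by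
  rw [← eventually_atTop]
  constructor
  · intro h
    filter_upwards [(afwEventually_and_globAfwEventually φ).1 0 h] with i hi v _ hpos hneg
    exact hi v ⟨hpos, hneg⟩
  · intro h
    obtain ⟨i, hi, hind⟩ := (h.and (eventually_ind_le w φ)).exists
    have := hi _ (litConsistent_sat _) (premise_sat_suffix hind).pos (premise_sat_suffix hind).neg
    rwa [propSat_sat_iff, prefixW, sat_afw_infixW_iff φ (by omega)] at this

end LTLF
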